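/- For any linear order L, the following are equivalent: (i) L condenses to 1 under the countable condensation (for all x y : L, Set.uIcc x y is countable); (ii) there exists an order embedding of L into the ω₁-lengthened rational line U. That is, U is universal for linear orders that condense to 1 under ∼_ω. -/

import Mathlib

/-- The canonical linear order of order type `ω₁`. -/
noncomputable abbrev Omega1 : Type := (Cardinal.aleph 1).ord.ToType

/-- `ω₁` consecutive blocks, each consisting of one point followed by a copy of `ℚ`. -/
noncomputable abbrev Dline : Type := Lex (Omega1 × (PUnit ⊕ₗ ℚ))

/-- The `ω₁`-lengthened rational line `U`. -/
noncomputable abbrev Uline : Type := (OrderDual Dline) ⊕ₗ (ℚ ⊕ₗ Dline)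

/-!
If all closed intervals of `L` are countable, split `L` at a point `x₀`: `Ici x₀` and the reversed
`Iio x₀` both have countable principal ideals `Iic y`. A linear order `M` with this property has a
cofinal well-ordered subset `S` whose initial segments are countable, so `S` embeds into `ω₁`.
Sending `y` to the least element of `S` above it gives a monotone map `M → ω₁` whose fibres lie in
principal ideals; they are countable and embed into the dense order `1 + ℚ`, which embeds `M`
into `D = ω₁ ×ₗ (1 + ℚ)`. Conversely, principal ideals of `D` are countable, hence so are the
closed intervals of `U`.
-/

open Set Cardinal Ordinal

universe u

theorem Omega1.countable_Iio (x : Omega1) : (Iio x).Countable :=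
  le_aleph0_iff_set_countable.1 (lt_aleph_one_iff.1 (by simpa using mk_Iio_lt x))

theorem Omega1.countable_Iic (x : Omega1) : (Iic x).Countable := by
  simpa only [Iio_insert] using (countable_Iio x).insert x

theorem type_le_ord_aleph_one {α : Type u} [LinearOrder α] [WellFoundedLT α]
    (h : ∀ a : α, (Iio a).Countable) : typeLT α ≤ (ℵ₁ : Cardinal.{u}).ord := by
  refine le_of_forall_lt fun o ho => ?_
  obtain ⟨a, rfl⟩ := typein_surj _ ho
  rw [lt_ord, card_typein, lt_aleph_one_iff]
  exact le_aleph0_iff_set_countable.2 (h a)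

theorem nonempty_orderEmbedding_omega1_of_countable_Iio {α : Type u} [LinearOrder α]
    [WellFoundedLT α] (h : ∀ a : α, (Iio a).Countable) : Nonempty (α ↪o Omega1) := by
  have : Ordinal.lift.{0} (typeLT α) ≤ Ordinal.lift.{u} (typeLT Omega1) := by
    rw [Ordinal.lift_uzero, type_toType, lift_ord, lift_aleph, Ordinal.lift_one]
    exact type_le_ord_aleph_one h
  obtain ⟨f⟩ := lift_type_le.{u, 0, 0}.1 this
  exact ⟨InitialSeg.toOrderEmbedding f⟩

/-- The records of a well-ordering `r` form a cofinal set on which `<` refines `r`. -/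
theorem exists_isCofinal_wellFoundedLT (α : Type*) [LinearOrder α] :
    ∃ s : Set α, IsCofinal s ∧ WellFoundedLT s := by
  let r : α → α → Prop := WellOrderingRel
  have hlt : ∀ a b : {a | ∀ b, r b a → b < a}, a < b → Subrel r _ a b := by
    rintro ⟨a, ha⟩ ⟨b, -⟩ (hab : a < b)
    rcases trichotomous_of r a b with h | rfl | h
    · exact h
    · exact absurd hab (lt_irrefl a)
    · exact absurd (ha b h) hab.not_gt
  exact ⟨_, isCofinal_setOfPred_imp_lt r,
    ⟨Subrelation.wf (hlt _ _) IsWellFounded.wf⟩⟩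

theorem IsCofinal.exists_monotone_le {α : Type*} [LinearOrder α] {s : Set α} [WellFoundedLT s]
    (hs : IsCofinal s) : ∃ f : α → s, Monotone f ∧ ∀ a, a ≤ f a := by
  have hne : ∀ a : α, {t : s | a ≤ t}.Nonempty := fun a =>
    let ⟨b, hb, hab⟩ := hs a
    ⟨⟨b, hb⟩, hab⟩
  refine ⟨fun a => wellFounded_lt.min _ (hne a), fun a a' h => ?_,
    fun a => wellFounded_lt.min_mem _ (hne a)⟩
  exact (wellFounded_lt (α := s)).min_le (h.trans (wellFounded_lt.min_mem _ (hne a')))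

theorem Prod.Lex.nonempty_orderEmbedding_of_monotone {α β γ : Type*} [LinearOrder α]
    [PartialOrder β] [Preorder γ] {f : α → β} (hf : Monotone f)
    (he : ∀ b, Nonempty (f ⁻¹' {b} ↪o γ)) : Nonempty (α ↪o β ×ₗ γ) := by
  let e b := (he b).some
  refine ⟨OrderEmbedding.ofStrictMono (fun a => toLex (f a, e (f a) ⟨a, rfl⟩))
    fun a a' h => ?_⟩
  rcases (hf h.le).lt_or_eq with hlt | heq
  · exact Prod.Lex.toLex_lt_toLex.2 (Or.inl hlt)
  · refine Prod.Lex.toLex_lt_toLex.2 (Or.inr ⟨heq, ?_⟩)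
    have transport :
        ∀ {b b'} (hb : b = b') (x : f ⁻¹' {b}), e b x = e b' ⟨x, hb ▸ x.2⟩ := by
      rintro b _ rfl x
      rfl
    exact (transport heq _).trans_lt
      ((e (f a')).strictMono (show (⟨a, heq⟩ : f ⁻¹' {f a'}) < ⟨a', rfl⟩ from h))

theorem exists_monotone_omega1_countable_fibers {M : Type*} [LinearOrder M]
    (hM : ∀ y : M, (Iic y).Countable) :
    ∃ f : M → Omega1, Monotone f ∧ ∀ o, (f ⁻¹' {o}).Countable := by
  obtain ⟨s, hs, _⟩ := exists_isCofinal_wellFoundedLT M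
  obtain ⟨c, hc, hle⟩ := hs.exists_monotone_le
  obtain ⟨g⟩ := nonempty_orderEmbedding_omega1_of_countable_Iio fun t : s =>
    ((hM t).preimage Subtype.val_injective).mono fun _ h => le_of_lt h
  refine ⟨g ∘ c, g.monotone.comp hc, fun o => ?_⟩
  rcases (g ∘ c ⁻¹' {o}).eq_empty_or_nonempty with h | ⟨y, rfl⟩
  · exact h ▸ countable_empty
  · exact (hM (c y)).mono fun z hz => (hle z).trans (g.injective hz).le

theorem nonempty_orderEmbedding_dline_of_countable_Iic {M : Type*} [LinearOrder M]
    (hM : ∀ y : M, (Iic y).Countable) : Nonempty (M ↪o Dline) := by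
  obtain ⟨f, hf, hfib⟩ := exists_monotone_omega1_countable_fibers hM
  refine Prod.Lex.nonempty_orderEmbedding_of_monotone hf fun o => ?_
  have := (hfib o).to_subtype
  exact Order.embedding_from_countable_to_dense _ _

theorem Prod.Lex.countable_Iic {α β : Type*} [Preorder α] [Preorder β] [Countable β]
    (hα : ∀ a : α, (Iic a).Countable) (x : α ×ₗ β) : (Iic x).Countable := by
  refine (((hα (ofLex x).1).prod countable_univ).preimage ofLex.injective).mono fun y hy => ?_
  exact mem_prod.2 ⟨Prod.Lex.monotone_fst_ofLex hy, mem_univ _⟩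

namespace Sum.Lex

variable {α β : Type*}

theorem countable_of_countable_preimage {s : Set (α ⊕ₗ β)} (hl : (inlₗ ⁻¹' s).Countable)
    (hr : (inrₗ ⁻¹' s).Countable) : s.Countable := by
  rw [← image_preimage_inl_union_image_preimage_inr s]
  exact (hl.image _).union (hr.image _)

variable [Preorder α] [Preorder β]

theorem countable_preimage_inl_Ici (hα : ∀ a : α, (Ici a).Countable) (x : α ⊕ₗ β) :
    (inlₗ ⁻¹' Ici x).Countable := by
  rcases x with a | b
  · exact (hα a).mono fun _ h => inl_le_inl_iff.1 h
  · exact countable_empty.mono fun _ h => not_inr_le_inl h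

theorem countable_preimage_inr_Iic (hβ : ∀ b : β, (Iic b).Countable) (x : α ⊕ₗ β) :
    (inrₗ ⁻¹' Iic x).Countable := by
  rcases x with a | b
  · exact countable_empty.mono fun _ h => not_inr_le_inl h
  · exact (hβ b).mono fun _ h => inr_le_inr_iff.1 h

theorem countable_Icc (hα : ∀ a : α, (Ici a).Countable) (hβ : ∀ b : β, (Iic b).Countable)
    (x y : α ⊕ₗ β) : (Icc x y).Countable :=
  countable_of_countable_preimage
    ((countable_preimage_inl_Ici hα x).mono (preimage_mono Icc_subset_Ici_self))
    ((countable_preimage_inr_Iic hβ y).mono (preimage_mono Icc_subset_Iic_self))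

theorem countable_Iic [Countable α] (hβ : ∀ b : β, (Iic b).Countable) (x : α ⊕ₗ β) :
    (Iic x).Countable :=
  countable_of_countable_preimage (to_countable _) (countable_preimage_inr_Iic hβ x)

end Sum.Lex

theorem Dline.countable_Iic (x : Dline) : (Iic x).Countable :=
  have : Countable (PUnit ⊕ₗ ℚ) := inferInstanceAs (Countable (PUnit ⊕ ℚ))
  Prod.Lex.countable_Iic Omega1.countable_Iic x

theorem Uline.countable_uIcc (x y : Uline) : (uIcc x y).Countable :=
  Sum.Lex.countable_Icc (fun a => Dline.countable_Iic (OrderDual.ofDual a))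
    (Sum.Lex.countable_Iic Dline.countable_Iic) _ _

theorem countable_Iic_of_countable_uIcc {L M : Type*} [LinearOrder L] [Preorder M]
    (hL : ∀ x y : L, (uIcc x y).Countable) (f : M ↪o L) {x₀ : L} (hf : ∀ m, x₀ ≤ f m)
    (y : M) : (Iic y).Countable := by
  refine ((hL x₀ (f y)).preimage f.injective).mono fun m hm => ?_
  exact Icc_subset_uIcc ⟨hf m, f.monotone hm⟩

theorem OrderDual.countable_uIcc {L : Type*} [LinearOrder L]
    (hL : ∀ x y : L, (uIcc x y).Countable) (x y : Lᵒᵈ) : (uIcc x y).Countable := by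
  rw [← toDual_ofDual x, ← toDual_ofDual y, uIcc_toDual]
  exact (hL _ _).preimage ofDual.injective

theorem nonempty_orderEmbedding_uline_of_countable_uIcc {L : Type*} [LinearOrder L]
    (hL : ∀ x y : L, (uIcc x y).Countable) : Nonempty (L ↪o Uline) := by
  rcases isEmpty_or_nonempty L with _ | ⟨⟨x₀⟩⟩
  · exact ⟨OrderEmbedding.ofIsEmpty⟩
  obtain ⟨f⟩ := nonempty_orderEmbedding_dline_of_countable_Iic (M := (Iio x₀)ᵒᵈ) <|
    countable_Iic_of_countable_uIcc (OrderDual.countable_uIcc hL) (OrderEmbedding.subtype _).dual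
      (x₀ := OrderDual.toDual x₀) fun m => (OrderDual.ofDual m).2.le
  obtain ⟨g⟩ := nonempty_orderEmbedding_dline_of_countable_Iic (M := Ici x₀) <|
    countable_Iic_of_countable_uIcc hL (OrderEmbedding.subtype _) fun m => m.2
  exact ⟨(OrderIso.sumLexIioIci x₀).symm.toOrderEmbedding.trans <|
    RelEmbedding.sumLexMap f.dual (g.trans (RelEmbedding.sumLexInr _ _))⟩

/-- (Theorem 3.14) A linear order `L` condenses to `1` under the
countable condensation if and only if it order-embeds into the `ω₁`-lengthened rational
line `U`: `U` is universal for linear orders condensing to `1` under `∼_ω`. -/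
theorem condenses_to_one_iff_embeds_into_Uline
    (L : Type*) [LinearOrder L] :
    (∀ x y : L, (Set.uIcc x y).Countable) ↔ Nonempty (L ↪o Uline) := by
  refine ⟨nonempty_orderEmbedding_uline_of_countable_uIcc, fun ⟨f⟩ x y => ?_⟩
  rw [← f.preimage_uIcc]
  exact (Uline.countable_uIcc _ _).preimage f.injective
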